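/- arXiv:math/0608067 — 6 statements merged into one kernel-verified Lean document; each statement's English description precedes it below -/
import Mathlib

section
/- Let γ: R → S^3 be a curve satisfying the geodesic equation D_{γ'}γ' + 2λ J(γ') = 0 with γ(0)=p a unit quaternion, γ'(0)=v a unit horizontal vector at p, where λ ∈ R. Then γ is given explicitly by γ(s) = cos(λs)cos(√(1+λ²)s)·p + [sin(λs)sin(√(1+λ²)s)/√(1+λ²)]·(λp − i·v) − sin(λs)cos(√(1+λ²)s)·(i·p) + [cos(λs)sin(√(1+λ²)s)/√(1+λ²)]·(λ(i·p) + v). -/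
/-!
Left multiplication by `J = i` is a complex structure, `J² = -1`, so `R(s) = cos λs - sin λs · J`
(formally `exp (-λsJ)`) satisfies `R' = -λJR` and commutes with `J`. Substituting `γ = R δ` turns
`γ'' + γ + 2λJγ' = 0` into `δ'' = -(1 + λ²) δ`, hence the candidate
`γ(s) = R(s) (cos ωs · p + sin ωs · w)` with `ω = √(1 + λ²)` and `ω w = λ J p + v` read off from
`γ'(0) = v`. The equation is linear with constant coefficients, so by uniqueness for the
first-order companion system a solution is determined by `γ(0)` and `γ'(0)`; expanding `R δ` gives
the formula.
-/

open Real
open scoped RealInnerProductSpace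

def qi : Quaternion ℝ := ⟨0, 1, 0, 0⟩

theorem qi_mul_qi : qi * qi = -1 := by
  ext <;>
    simp only [Quaternion.re_mul, Quaternion.imI_mul, Quaternion.imJ_mul, Quaternion.imK_mul] <;>
    simp [qi, Quaternion.re_one, Quaternion.imI_one, Quaternion.imJ_one, Quaternion.imK_one]

section SecondOrderLinear

variable {E : Type*} [NormedAddCommGroup E] [NormedSpace ℝ E]

noncomputable def secondOrderCompanion (A B : E →L[ℝ] E) : E × E →L[ℝ] E × E :=
  (ContinuousLinearMap.snd ℝ E E).prod
    (-(A.comp (ContinuousLinearMap.snd ℝ E E) + B.comp (ContinuousLinearMap.fst ℝ E E)))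

theorem secondOrderCompanion_apply (A B : E →L[ℝ] E) (x y : E) :
    secondOrderCompanion A B (x, y) = (y, -(A y + B x)) := rfl

theorem hasDerivAt_prodMk_secondOrderCompanion {A B : E →L[ℝ] E} {f f' f'' : ℝ → E}
    (hf : ∀ t, HasDerivAt f (f' t) t) (hf' : ∀ t, HasDerivAt f' (f'' t) t)
    (hf'' : ∀ t, f'' t + A (f' t) + B (f t) = 0) (t : ℝ) :
    HasDerivAt (fun t => (f t, f' t)) (secondOrderCompanion A B (f t, f' t)) t := by
  have hf''t : f'' t = -(A (f' t) + B (f t)) :=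
    eq_neg_of_add_eq_zero_left (by rw [← add_assoc, hf'' t])
  rw [secondOrderCompanion_apply, ← hf''t]
  exact (hf t).prodMk (hf' t)

theorem eq_of_secondOrderLinear (A B : E →L[ℝ] E) {t₀ : ℝ} {f f' f'' g g' g'' : ℝ → E}
    (hf : ∀ t, HasDerivAt f (f' t) t) (hf' : ∀ t, HasDerivAt f' (f'' t) t)
    (hf'' : ∀ t, f'' t + A (f' t) + B (f t) = 0)
    (hg : ∀ t, HasDerivAt g (g' t) t) (hg' : ∀ t, HasDerivAt g' (g'' t) t)
    (hg'' : ∀ t, g'' t + A (g' t) + B (g t) = 0)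
    (h₀ : f t₀ = g t₀) (h₀' : f' t₀ = g' t₀) : f = g := by
  have := ODE_solution_unique_univ (v := fun _ => secondOrderCompanion A B)
    (s := fun _ => Set.univ) (t₀ := t₀)
    (fun _ => (secondOrderCompanion A B).lipschitz.lipschitzOnWith)
    (fun t => ⟨hasDerivAt_prodMk_secondOrderCompanion hf hf' hf'' t, trivial⟩)
    (fun t => ⟨hasDerivAt_prodMk_secondOrderCompanion hg hg' hg'' t, trivial⟩) (by rw [h₀, h₀'])
  exact funext fun t => congrArg Prod.fst (congrFun this t)

end SecondOrderLinear

section HarmonicMotion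

variable {E : Type*} [NormedAddCommGroup E] [NormedSpace ℝ E]

noncomputable def harmonicMotion (ω : ℝ) (a b : E) (s : ℝ) : E :=
  cos (ω * s) • a + sin (ω * s) • b

@[simp]
theorem harmonicMotion_zero (ω : ℝ) (a b : E) : harmonicMotion ω a b 0 = a := by
  simp [harmonicMotion]

theorem harmonicMotion_neg (ω : ℝ) (a b : E) (s : ℝ) :
    harmonicMotion ω (-a) (-b) s = -harmonicMotion ω a b s := by
  simp only [harmonicMotion, smul_neg, neg_add]

theorem hasDerivAt_harmonicMotion (ω : ℝ) (a b : E) (s : ℝ) :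
    HasDerivAt (harmonicMotion ω a b) (ω • harmonicMotion ω b (-a) s) s := by
  have hlin : HasDerivAt (fun s => ω * s) ω s := by simpa using (hasDerivAt_id s).const_mul ω
  refine ((hlin.cos.smul_const a).add (hlin.sin.smul_const b)).congr_deriv ?_
  simp only [harmonicMotion]
  module

end HarmonicMotion

section TwistedHarmonicMotion

variable {𝔸 : Type*} [NormedRing 𝔸] [NormedAlgebra ℝ 𝔸] {J : 𝔸}

theorem mul_harmonicMotion (c : 𝔸) (ω : ℝ) (a b : 𝔸) (s : ℝ) :
    c * harmonicMotion ω a b s = harmonicMotion ω (c * a) (c * b) s := by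
  simp only [harmonicMotion, mul_add, mul_smul_comm]

theorem hasDerivAt_harmonicMotion_one_neg (hJ : J * J = -1) (lam s : ℝ) :
    HasDerivAt (harmonicMotion lam 1 (-J)) (-lam • (J * harmonicMotion lam 1 (-J) s)) s := by
  refine (hasDerivAt_harmonicMotion lam 1 (-J) s).congr_deriv ?_
  rw [mul_harmonicMotion, mul_one, mul_neg, hJ, neg_neg, neg_smul, ← smul_neg, ← harmonicMotion_neg]

variable (J) in
noncomputable def geodesicModel (lam ω : ℝ) (p w : 𝔸) (s : ℝ) : 𝔸 :=
  harmonicMotion lam 1 (-J) s * harmonicMotion ω p w s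

variable (J) in
noncomputable def geodesicModelVelocity (lam ω : ℝ) (p w : 𝔸) (s : ℝ) : 𝔸 :=
  -lam • (J * geodesicModel J lam ω p w s)
    + ω • (harmonicMotion lam 1 (-J) s * harmonicMotion ω w (-p) s)

@[simp]
theorem geodesicModel_zero (lam ω : ℝ) (p w : 𝔸) : geodesicModel J lam ω p w 0 = p := by
  simp [geodesicModel]

@[simp]
theorem geodesicModelVelocity_zero (lam ω : ℝ) (p w : 𝔸) :
    geodesicModelVelocity J lam ω p w 0 = -lam • (J * p) + ω • w := by
  simp [geodesicModelVelocity]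

theorem hasDerivAt_geodesicModel (hJ : J * J = -1) (lam ω : ℝ) (p w : 𝔸) (s : ℝ) :
    HasDerivAt (geodesicModel J lam ω p w) (geodesicModelVelocity J lam ω p w s) s := by
  refine ((hasDerivAt_harmonicMotion_one_neg hJ lam s).mul
    (hasDerivAt_harmonicMotion ω p w s)).congr_deriv ?_
  simp only [geodesicModelVelocity, geodesicModel, smul_mul_assoc, mul_smul_comm, mul_assoc]

theorem hasDerivAt_geodesicModelVelocity (hJ : J * J = -1) {lam ω : ℝ} (hω : ω ^ 2 = 1 + lam ^ 2)
    (p w : 𝔸) (s : ℝ) :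
    HasDerivAt (geodesicModelVelocity J lam ω p w)
      (-geodesicModel J lam ω p w s - (2 * lam) • (J * geodesicModelVelocity J lam ω p w s)) s := by
  have hvel := ((hasDerivAt_harmonicMotion_one_neg hJ lam s).mul
    (hasDerivAt_harmonicMotion ω w (-p) s)).const_smul ω
  refine (((hasDerivAt_geodesicModel hJ lam ω p w s).const_mul J).const_smul (-lam)
    |>.add hvel).congr_deriv ?_
  simp only [geodesicModelVelocity, geodesicModel, harmonicMotion_neg, smul_mul_assoc,
    mul_smul_comm, mul_add, mul_neg, neg_mul, smul_add, smul_neg, ← mul_assoc, hJ, one_mul]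
  linear_combination (norm := module)
    hω.symm • (harmonicMotion lam 1 (-J) s * harmonicMotion ω p w s)

end TwistedHarmonicMotion

theorem geodesic_explicit_general (lam : ℝ) (p v : Quaternion ℝ)
    (γ γ' γ'' : ℝ → Quaternion ℝ)
    (hγ0 : γ 0 = p) (hγ'0 : γ' 0 = v)
    (hd1 : ∀ s, HasDerivAt γ (γ' s) s) (hd2 : ∀ s, HasDerivAt γ' (γ'' s) s)
    (heq : ∀ s, γ'' s + γ s + (2 * lam) • (qi * γ' s) = 0) :
    ∀ s : ℝ, γ s =
      (Real.cos (lam * s) * Real.cos (Real.sqrt (1 + lam ^ 2) * s)) • p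
      + (Real.sin (lam * s) * Real.sin (Real.sqrt (1 + lam ^ 2) * s)
          / Real.sqrt (1 + lam ^ 2)) • (lam • p - qi * v)
      - (Real.sin (lam * s) * Real.cos (Real.sqrt (1 + lam ^ 2) * s)) • (qi * p)
      + (Real.cos (lam * s) * Real.sin (Real.sqrt (1 + lam ^ 2) * s)
          / Real.sqrt (1 + lam ^ 2)) • (lam • (qi * p) + v) := by
  set ω := √(1 + lam ^ 2)
  have hω : ω ^ 2 = 1 + lam ^ 2 := sq_sqrt (by positivity)
  have hω0 : ω ≠ 0 := by positivity
  have hγ : γ = geodesicModel qi lam ω p (ω⁻¹ • (lam • (qi * p) + v)) := by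
    refine eq_of_secondOrderLinear ((2 * lam) • ContinuousLinearMap.mul ℝ _ qi)
      (ContinuousLinearMap.id ℝ _) (t₀ := 0) hd1 hd2 ?_
      (hasDerivAt_geodesicModel qi_mul_qi lam ω p _)
      (hasDerivAt_geodesicModelVelocity qi_mul_qi hω p _) ?_ ?_ ?_
    · simpa [add_right_comm] using heq
    · exact fun t => by simp
    · simp [hγ0]
    · simp [hγ'0, smul_smul, hω0]
  intro s
  rw [hγ]
  simp only [geodesicModel, harmonicMotion, add_mul, mul_add, one_mul, mul_smul_comm,
    smul_mul_assoc, neg_mul, ← mul_assoc, qi_mul_qi]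
  match_scalars <;> field_simp

/-- Explicit formula for the sub-Riemannian geodesics of `S³`: if `γ` solves the
geodesic equation `D_{γ'}γ' + 2λ J(γ') = 0` (equivalently `γ'' + γ + 2λ(i·γ') = 0`
in `ℝ⁴`) with `γ(0) = p` a unit quaternion and `γ'(0) = v` a unit horizontal
tangent vector at `p`, then
`γ(s) = cos(λs)cos(√(1+λ²)s)·p + [sin(λs)sin(√(1+λ²)s)/√(1+λ²)]·(λp − i·v)
 − sin(λs)cos(√(1+λ²)s)·(i·p) + [cos(λs)sin(√(1+λ²)s)/√(1+λ²)]·(λ(i·p) + v)`. -/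
theorem geodesic_explicit (lam : ℝ) (p v : Quaternion ℝ)
    (γ γ' γ'' : ℝ → Quaternion ℝ)
    (hp : ‖p‖ = 1) (hv : ‖v‖ = 1) (hvp : ⟪v, p⟫ = 0) (hvh : ⟪v, qi * p⟫ = 0)
    (hγ0 : γ 0 = p) (hγ'0 : γ' 0 = v)
    (hd1 : ∀ s, HasDerivAt γ (γ' s) s) (hd2 : ∀ s, HasDerivAt γ' (γ'' s) s)
    (heq : ∀ s, γ'' s + γ s + (2 * lam) • (qi * γ' s) = 0) :
    ∀ s : ℝ, γ s =
      (Real.cos (lam * s) * Real.cos (Real.sqrt (1 + lam ^ 2) * s)) • p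
      + (Real.sin (lam * s) * Real.sin (Real.sqrt (1 + lam ^ 2) * s)
          / Real.sqrt (1 + lam ^ 2)) • (lam • p - qi * v)
      - (Real.sin (lam * s) * Real.cos (Real.sqrt (1 + lam ^ 2) * s)) • (qi * p)
      + (Real.cos (lam * s) * Real.sin (Real.sqrt (1 + lam ^ 2) * s)
          / Real.sqrt (1 + lam ^ 2)) • (lam • (qi * p) + v) :=
  geodesic_explicit_general lam p v γ γ' γ'' hγ0 hγ'0 hd1 hd2 heq
end

section
/- For a curve γ in S^3 ⊂ R^4 satisfying γ'' + γ + 2λ(i·γ') = 0 with unit horizontal initial velocity, the functions ⟨γ'(s), i·γ(s)⟩ and |γ'(s)|² are constant along γ; in particular γ stays horizontal and parameterized by arc-length. -/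
open Real
open scoped RealInnerProductSpace

/-!
Write `h = ‖γ‖²`, `k = ⟪γ', γ⟫`, `f = ⟪γ', iγ⟫`, `g = ‖γ'‖²`. Since left multiplication by `i` is a
skew-adjoint isometry, the equation gives two first integrals, `g + h` and `f + λh`, and
`k' = g - h + 2λf`. With the initial data these become `g = 2 - h`, `f = λ(1 - h)`, so
`x = 1 - h` and `y = 2k` obey the harmonic oscillator `x' = -y`, `y' = 4(1 + λ²)x` with zero
initial values; its energy `4(1 + λ²)x² + y²` is conserved, hence `h ≡ 1`, and then `f ≡ 0`,
`g ≡ 1`.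
-/

lemma eq_of_hasDerivAt_eq_zero {F : ℝ → ℝ} (hF : ∀ s, HasDerivAt F 0 s) (s : ℝ) : F s = F 0 :=
  is_const_of_deriv_eq_zero (fun t => (hF t).differentiableAt) (fun t => (hF t).deriv) s 0

lemma eq_zero_of_hasDerivAt_harmonic {c : ℝ} (hc : 0 < c) {x y : ℝ → ℝ}
    (hx : ∀ s, HasDerivAt x (-y s) s) (hy : ∀ s, HasDerivAt y (c * x s) s)
    (hx0 : x 0 = 0) (hy0 : y 0 = 0) (s : ℝ) : x s = 0 ∧ y s = 0 := by
  have henergy : c * x s ^ 2 + y s ^ 2 = 0 := by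
    have hderiv : ∀ t, HasDerivAt (fun t => c * x t ^ 2 + y t ^ 2) 0 t := fun t =>
      ((((hx t).pow 2).const_mul c).add ((hy t).pow 2)).congr_deriv (by ring)
    simpa [hx0, hy0] using eq_of_hasDerivAt_eq_zero hderiv s
  have hx2 : x s ^ 2 = 0 := by nlinarith [sq_nonneg (x s), sq_nonneg (y s)]
  have hy2 : y s ^ 2 = 0 := by nlinarith [sq_nonneg (x s), sq_nonneg (y s)]
  exact ⟨pow_eq_zero_iff two_ne_zero |>.mp hx2, pow_eq_zero_iff two_ne_zero |>.mp hy2⟩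

section GeodesicEquation

variable {E : Type*} [NormedAddCommGroup E] [InnerProductSpace ℝ E]

lemma inner_apply_self_eq_zero_of_skew {J : E →L[ℝ] E} (hJ : ∀ a b, ⟪J a, b⟫ = -⟪a, J b⟫)
    (a : E) : ⟪J a, a⟫ = 0 := by
  have := hJ a a
  rw [real_inner_comm (J a) a] at this
  linarith

structure SolvesGeodesicEquation (J : E →L[ℝ] E) (lam : ℝ) (γ γ' γ'' : ℝ → E) : Prop where
  hasDerivAt : ∀ s, HasDerivAt γ (γ' s) s
  hasDerivAt_deriv : ∀ s, HasDerivAt γ' (γ'' s) s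
  eq : ∀ s, γ'' s + γ s + (2 * lam) • J (γ' s) = 0

namespace SolvesGeodesicEquation

variable {J : E →L[ℝ] E} {lam : ℝ} {γ γ' γ'' : ℝ → E}

lemma add_eq (h : SolvesGeodesicEquation J lam γ γ' γ'') (s : ℝ) :
    γ'' s + γ s = -((2 * lam) • J (γ' s)) :=
  eq_neg_of_add_eq_zero_left (h.eq s)

lemma norm_sq_add_norm_sq_eq (h : SolvesGeodesicEquation J lam γ γ' γ'')
    (hJ : ∀ a b, ⟪J a, b⟫ = -⟪a, J b⟫) (s : ℝ) :
    ‖γ' s‖ ^ 2 + ‖γ s‖ ^ 2 = ‖γ' 0‖ ^ 2 + ‖γ 0‖ ^ 2 := by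
  refine eq_of_hasDerivAt_eq_zero (F := fun t => ‖γ' t‖ ^ 2 + ‖γ t‖ ^ 2) (fun t => ?_) s
  refine ((h.hasDerivAt_deriv t).norm_sq.add (h.hasDerivAt t).norm_sq).congr_deriv ?_
  have hsum : ⟪γ' t, γ'' t + γ t⟫ = 0 := by
    rw [h.add_eq, inner_neg_right, real_inner_smul_right, real_inner_comm,
      inner_apply_self_eq_zero_of_skew hJ, mul_zero, neg_zero]
  rw [inner_add_right, real_inner_comm (γ t)] at hsum
  linear_combination 2 * hsum

lemma inner_apply_add_mul_norm_sq_eq (h : SolvesGeodesicEquation J lam γ γ' γ'')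
    (hJ : ∀ a b, ⟪J a, b⟫ = -⟪a, J b⟫) (hJJ : ∀ a b, ⟪J a, J b⟫ = ⟪a, b⟫) (s : ℝ) :
    ⟪γ' s, J (γ s)⟫ + lam * ‖γ s‖ ^ 2 = ⟪γ' 0, J (γ 0)⟫ + lam * ‖γ 0‖ ^ 2 := by
  refine eq_of_hasDerivAt_eq_zero (F := fun t => ⟪γ' t, J (γ t)⟫ + lam * ‖γ t‖ ^ 2)
    (fun t => ?_) s
  have hJγ : HasDerivAt (fun t => J (γ t)) (J (γ' t)) t :=
    J.hasFDerivAt.comp_hasDerivAt t (h.hasDerivAt t)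
  refine (((h.hasDerivAt_deriv t).inner ℝ hJγ).add
    ((h.hasDerivAt t).norm_sq.const_mul lam)).congr_deriv ?_
  have hsum : ⟪γ'' t + γ t, J (γ t)⟫ = -(2 * lam) * ⟪γ' t, γ t⟫ := by
    rw [h.add_eq, inner_neg_left, real_inner_smul_left, hJJ]
    ring
  rw [inner_add_left, real_inner_comm (J (γ t)) (γ t), inner_apply_self_eq_zero_of_skew hJ] at hsum
  rw [real_inner_comm (J (γ' t)) (γ' t), inner_apply_self_eq_zero_of_skew hJ, real_inner_comm (γ' t) (γ t)]
  linear_combination hsum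

lemma hasDerivAt_inner (h : SolvesGeodesicEquation J lam γ γ' γ'')
    (hJ : ∀ a b, ⟪J a, b⟫ = -⟪a, J b⟫) (s : ℝ) :
    HasDerivAt (fun t => ⟪γ' t, γ t⟫)
      (‖γ' s‖ ^ 2 - ‖γ s‖ ^ 2 + 2 * lam * ⟪γ' s, J (γ s)⟫) s := by
  refine ((h.hasDerivAt_deriv s).inner ℝ (h.hasDerivAt s)).congr_deriv ?_
  have hsum : ⟪γ'' s + γ s, γ s⟫ = 2 * lam * ⟪γ' s, J (γ s)⟫ := by
    rw [h.add_eq, inner_neg_left, real_inner_smul_left, hJ]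
    ring
  rw [inner_add_left, real_inner_self_eq_norm_sq] at hsum
  rw [real_inner_self_eq_norm_sq]
  linear_combination hsum

theorem horizontal_and_norm_eq_one (h : SolvesGeodesicEquation J lam γ γ' γ'')
    (hJ : ∀ a b, ⟪J a, b⟫ = -⟪a, J b⟫) (hJJ : ∀ a b, ⟪J a, J b⟫ = ⟪a, b⟫)
    (hp : ‖γ 0‖ = 1) (hv : ‖γ' 0‖ = 1) (htan : ⟪γ' 0, γ 0⟫ = 0) (hhor : ⟪γ' 0, J (γ 0)⟫ = 0)
    (s : ℝ) : ⟪γ' s, J (γ s)⟫ = 0 ∧ ‖γ' s‖ = 1 := by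
  have henergy : ∀ t, ‖γ' t‖ ^ 2 = 2 - ‖γ t‖ ^ 2 := fun t => by
    linear_combination h.norm_sq_add_norm_sq_eq hJ t + (‖γ' 0‖ + 1) * hv + (‖γ 0‖ + 1) * hp
  have hmoment : ∀ t, ⟪γ' t, J (γ t)⟫ = lam * (1 - ‖γ t‖ ^ 2) := fun t => by
    linear_combination h.inner_apply_add_mul_norm_sq_eq hJ hJJ t + hhor + lam * (‖γ 0‖ + 1) * hp
  have hx : ∀ t, HasDerivAt (fun t => 1 - ‖γ t‖ ^ 2) (-(2 * ⟪γ' t, γ t⟫)) t := fun t =>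
    ((h.hasDerivAt t).norm_sq.const_sub 1).congr_deriv (by rw [real_inner_comm])
  have hy : ∀ t, HasDerivAt (fun t => 2 * ⟪γ' t, γ t⟫)
      (4 * (1 + lam ^ 2) * (1 - ‖γ t‖ ^ 2)) t := fun t =>
    ((h.hasDerivAt_inner hJ t).const_mul 2).congr_deriv (by rw [henergy, hmoment]; ring)
  obtain ⟨hunit, -⟩ := eq_zero_of_hasDerivAt_harmonic (by positivity) hx hy
    (by simp [hp]) (by simp [htan]) s
  refine ⟨by rw [hmoment, hunit, mul_zero], ?_⟩
  have hsq : ‖γ' s‖ ^ 2 = 1 ^ 2 := by linear_combination henergy s + hunit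
  exact (pow_left_inj₀ (norm_nonneg _) zero_le_one two_ne_zero).mp hsq

end SolvesGeodesicEquation

end GeodesicEquation

lemma inner_qi_mul_left (a b : Quaternion ℝ) : ⟪qi * a, b⟫ = -⟪a, qi * b⟫ := by
  obtain ⟨hre, hI, hJ, hK⟩ : qi.re = 0 ∧ qi.imI = 1 ∧ qi.imJ = 0 ∧ qi.imK = 0 :=
    ⟨rfl, rfl, rfl, rfl⟩
  simp only [Quaternion.inner_def, Quaternion.re_mul, Quaternion.imI_mul, Quaternion.imJ_mul,
    Quaternion.imK_mul, Quaternion.re_star, Quaternion.imI_star, Quaternion.imJ_star,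
    Quaternion.imK_star, hre, hI, hJ, hK]
  ring

lemma inner_qi_mul_qi_mul (a b : Quaternion ℝ) : ⟪qi * a, qi * b⟫ = ⟪a, b⟫ := by
  obtain ⟨hre, hI, hJ, hK⟩ : qi.re = 0 ∧ qi.imI = 1 ∧ qi.imJ = 0 ∧ qi.imK = 0 :=
    ⟨rfl, rfl, rfl, rfl⟩
  simp only [Quaternion.inner_def, Quaternion.re_mul, Quaternion.imI_mul, Quaternion.imJ_mul,
    Quaternion.imK_mul, Quaternion.re_star, Quaternion.imI_star, Quaternion.imJ_star,
    Quaternion.imK_star, hre, hI, hJ, hK]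
  ring

/-- Along any solution of `γ'' + γ + 2λ(i·γ') = 0` on `S³` with unit horizontal
tangent initial velocity, the functions `⟨γ', i·γ⟩` and `|γ'|²` are constant:
the curve stays horizontal and parameterized by arc-length. -/
theorem geodesic_horizontal_arclength (lam : ℝ) (γ γ' γ'' : ℝ → Quaternion ℝ)
    (hp : ‖γ 0‖ = 1) (hv : ‖γ' 0‖ = 1)
    (htan : ⟪γ' 0, γ 0⟫ = 0) (hhor : ⟪γ' 0, qi * γ 0⟫ = 0)
    (hd1 : ∀ s, HasDerivAt γ (γ' s) s) (hd2 : ∀ s, HasDerivAt γ' (γ'' s) s)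
    (heq : ∀ s, γ'' s + γ s + (2 * lam) • (qi * γ' s) = 0) :
    ∀ s : ℝ, ⟪γ' s, qi * γ s⟫ = 0 ∧ ‖γ' s‖ = 1 :=
  SolvesGeodesicEquation.horizontal_and_norm_eq_one (J := ContinuousLinearMap.mul ℝ _ qi)
    ⟨hd1, hd2, heq⟩ inner_qi_mul_left inner_qi_mul_qi_mul hp hv htan hhor
end

section
/- Let T_ρ ⊂ S^3 be the Clifford torus {(z1,z2) ∈ C² : |z1|²=ρ², |z2|²=1−ρ²} for ρ ∈ (0,1), let q ∈ T_ρ, and let w = i·(αz1, −α⁻¹z2) with α = √(1−ρ²)/ρ be the unit horizontal tangent vector to T_ρ at q. Then the geodesic γ of curvature λ with γ(0)=q, γ'(0)=w is entirely contained in T_ρ if and only if λ = (2ρ²−1)/(2ρ√(1−ρ²)). -/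
/-! Only `z₁ = re + imI·i` matters, and left multiplication by `qi` acts on it as multiplication
by `i`, so `z = z₁ ∘ γ` solves `z'' + z + 2λ i z' = 0` in `ℂ`. For `P = ⟪z, z'⟫` and `Q = P'` this
gives `(|z|²)' = 2P` and `Q' = -4(1 + λ²) P`, so `P` is a harmonic oscillator and `|z|²` is constant
iff `P(0) = Q(0) = 0`. For the horizontal velocity `z'(0) = α i z(0)` one always has `P(0) = 0`,
while `Q(0) = |z(0)|² (α² + 2λα - 1)`. -/

open Real
open scoped RealInnerProductSpace

open Complex

lemma harmonic_oscillator_eq_zero {c : ℝ} (hc : 0 < c) {u v : ℝ → ℝ}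
    (hu : ∀ s, HasDerivAt u (v s) s) (hv : ∀ s, HasDerivAt v (-c * u s) s)
    (hu0 : u 0 = 0) (hv0 : v 0 = 0) (s : ℝ) : u s = 0 := by
  have hE : ∀ t, HasDerivAt (fun t => v t ^ 2 + c * u t ^ 2) 0 t := fun t =>
    (((hv t).fun_pow 2).fun_add (((hu t).fun_pow 2).const_mul c)).congr_deriv (by ring)
  have hEs : v s ^ 2 + c * u s ^ 2 = v 0 ^ 2 + c * u 0 ^ 2 :=
    is_const_of_deriv_eq_zero (fun t => (hE t).differentiableAt) (fun t => (hE t).deriv) s 0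
  rw [hu0, hv0] at hEs
  have hus : u s ^ 2 = 0 := by nlinarith [sq_nonneg (v s), sq_nonneg (u s)]
  exact pow_eq_zero_iff two_ne_zero |>.1 hus

lemma eq_zero_of_hasDerivAt_of_forall_eq {f : ℝ → ℝ} {f' C s : ℝ} (hf : ∀ t, f t = C)
    (h : HasDerivAt f f' s) : f' = 0 :=
  h.unique (by simpa [funext hf] using hasDerivAt_const s C)

section CurvedGeodesicEquation

variable {lam : ℝ} {z z' z'' : ℝ → ℂ}

lemma hasDerivAt_inner_velocity (hz : ∀ s, HasDerivAt z (z' s) s)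
    (hz' : ∀ s, HasDerivAt z' (z'' s) s)
    (hode : ∀ s, z'' s + z s + (2 * lam) • (I * z' s) = 0) (s : ℝ) :
    HasDerivAt (fun t => ⟪z t, z' t⟫)
      (‖z' s‖ ^ 2 - ‖z s‖ ^ 2 - 2 * lam * ⟪z s, I * z' s⟫) s := by
  have hz'' : z'' s = -z s - (2 * lam) • (I * z' s) := by
    linear_combination (norm := module) hode s
  refine ((hz s).inner ℝ (hz' s)).congr_deriv ?_
  rw [hz'']
  simp [Complex.inner, Complex.sq_norm, Complex.normSq_apply]
  ring

lemma hasDerivAt_inner_velocity_deriv (hz : ∀ s, HasDerivAt z (z' s) s)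
    (hz' : ∀ s, HasDerivAt z' (z'' s) s)
    (hode : ∀ s, z'' s + z s + (2 * lam) • (I * z' s) = 0) (s : ℝ) :
    HasDerivAt (fun t => ‖z' t‖ ^ 2 - ‖z t‖ ^ 2 - 2 * lam * ⟪z t, I * z' t⟫)
      (-(4 * (1 + lam ^ 2)) * ⟪z s, z' s⟫) s := by
  have hz'' : z'' s = -z s - (2 * lam) • (I * z' s) := by
    linear_combination (norm := module) hode s
  refine (((hz' s).norm_sq.sub (hz s).norm_sq).sub
    (((hz s).inner ℝ ((hz' s).const_mul I)).const_mul (2 * lam))).congr_deriv ?_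
  rw [hz'']
  simp [Complex.inner]
  ring

theorem norm_sq_const_iff (hz : ∀ s, HasDerivAt z (z' s) s)
    (hz' : ∀ s, HasDerivAt z' (z'' s) s)
    (hode : ∀ s, z'' s + z s + (2 * lam) • (I * z' s) = 0) :
    (∀ s, ‖z s‖ ^ 2 = ‖z 0‖ ^ 2) ↔
      ⟪z 0, z' 0⟫ = 0 ∧ ‖z' 0‖ ^ 2 - ‖z 0‖ ^ 2 - 2 * lam * ⟪z 0, I * z' 0⟫ = 0 := by
  have hP := hasDerivAt_inner_velocity hz hz' hode
  constructor
  · intro hconst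
    have hPzero : ∀ s, ⟪z s, z' s⟫ = 0 := fun s => by
      simpa using eq_zero_of_hasDerivAt_of_forall_eq hconst (hz s).norm_sq
    exact ⟨hPzero 0, eq_zero_of_hasDerivAt_of_forall_eq hPzero (hP 0)⟩
  · rintro ⟨hP0, hQ0⟩ s
    have hPzero := harmonic_oscillator_eq_zero (by positivity) hP
      (hasDerivAt_inner_velocity_deriv hz hz' hode) hP0 hQ0
    exact is_const_of_deriv_eq_zero (fun t => (hz t).norm_sq.differentiableAt)
      (fun t => by rw [(hz t).norm_sq.deriv, hPzero, mul_zero]) s 0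

theorem norm_sq_const_iff_of_horizontal (hz : ∀ s, HasDerivAt z (z' s) s)
    (hz' : ∀ s, HasDerivAt z' (z'' s) s)
    (hode : ∀ s, z'' s + z s + (2 * lam) • (I * z' s) = 0) {α : ℝ}
    (hv0 : z' 0 = α • (I * z 0)) (hz0 : z 0 ≠ 0) :
    (∀ s, ‖z s‖ ^ 2 = ‖z 0‖ ^ 2) ↔ α ^ 2 + 2 * lam * α = 1 := by
  have hQ0 : ‖z' 0‖ ^ 2 - ‖z 0‖ ^ 2 - 2 * lam * ⟪z 0, I * z' 0⟫ =
      ‖z 0‖ ^ 2 * (α ^ 2 + 2 * lam * α - 1) := by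
    rw [hv0]
    simp [Complex.inner, mul_pow, sq_abs, Complex.sq_norm, Complex.normSq_apply]
    ring
  have hP0 : ⟪z 0, z' 0⟫ = 0 := by
    rw [hv0]
    simp [Complex.inner]
    ring
  rw [norm_sq_const_iff hz hz' hode, hQ0, mul_eq_zero, sub_eq_zero]
  simp [hP0, hz0]

end CurvedGeodesicEquation

lemma clifford_curvature_iff {ρ : ℝ} (hρ0 : 0 < ρ) (hρ1 : ρ < 1) (lam : ℝ) :
    (√(1 - ρ ^ 2) / ρ) ^ 2 + 2 * lam * (√(1 - ρ ^ 2) / ρ) = 1 ↔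
      lam = (2 * ρ ^ 2 - 1) / (2 * ρ * √(1 - ρ ^ 2)) := by
  have hs : 0 < √(1 - ρ ^ 2) := Real.sqrt_pos.2 (by nlinarith)
  have hs2 : √(1 - ρ ^ 2) ^ 2 = 1 - ρ ^ 2 := Real.sq_sqrt (by nlinarith)
  rw [eq_div_iff (by positivity)]
  field_simp
  constructor <;> intro h
  · linear_combination h - hs2
  · linear_combination h + hs2

/-- The first coordinate of `q = z₁ + z₂ j` in the splitting `ℍ = ℂ ⊕ ℂ j`. -/
noncomputable def z₁ : Quaternion ℝ →L[ℝ] ℂ :=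
  LinearMap.toContinuousLinearMap
    { toFun := fun p => ⟨p.re, p.imI⟩
      map_add' := fun p q => by apply Complex.ext <;> simp
      map_smul' := fun c p => by apply Complex.ext <;> simp }

@[simp] lemma z₁_re (p : Quaternion ℝ) : (z₁ p).re = p.re := rfl

@[simp] lemma z₁_im (p : Quaternion ℝ) : (z₁ p).im = p.imI := rfl

lemma z₁_qi_mul (p : Quaternion ℝ) : z₁ (qi * p) = I * z₁ p := by
  apply Complex.ext
  · rw [z₁_re, Quaternion.re_mul]; simp [qi]
  · rw [z₁_im, Quaternion.imI_mul]; simp [qi]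

lemma sq_norm_z₁ (p : Quaternion ℝ) : ‖z₁ p‖ ^ 2 = p.re ^ 2 + p.imI ^ 2 := by
  rw [Complex.sq_norm, Complex.normSq_apply]
  simp [sq]

theorem geodesic_in_clifford_torus_general (ρ lam : ℝ) (hρ : ρ ∈ Set.Ioo (0:ℝ) 1)
    (q : Quaternion ℝ) (hqT : q.re ^ 2 + q.imI ^ 2 = ρ ^ 2)
    (γ γ' γ'' : ℝ → Quaternion ℝ)
    (hγ0 : γ 0 = q)
    (hγ'0 : γ' 0 = qi * ⟨Real.sqrt (1 - ρ ^ 2) / ρ * q.re,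
        Real.sqrt (1 - ρ ^ 2) / ρ * q.imI,
        -(q.imJ * (ρ / Real.sqrt (1 - ρ ^ 2))),
        -(q.imK * (ρ / Real.sqrt (1 - ρ ^ 2)))⟩)
    (hd1 : ∀ s, HasDerivAt γ (γ' s) s) (hd2 : ∀ s, HasDerivAt γ' (γ'' s) s)
    (heq : ∀ s, γ'' s + γ s + (2 * lam) • (qi * γ' s) = 0) :
    (∀ s, (γ s).re ^ 2 + (γ s).imI ^ 2 = ρ ^ 2) ↔
      lam = (2 * ρ ^ 2 - 1) / (2 * ρ * Real.sqrt (1 - ρ ^ 2)) := by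
  obtain ⟨hρ0, hρ1⟩ := hρ
  have hz0 : ‖z₁ (γ 0)‖ ^ 2 = ρ ^ 2 := by rw [sq_norm_z₁, hγ0, hqT]
  have hode : ∀ s, z₁ (γ'' s) + z₁ (γ s) + (2 * lam) • (I * z₁ (γ' s)) = 0 := fun s => by
    simpa [z₁_qi_mul] using congrArg z₁ (heq s)
  have hv0 : z₁ (γ' 0) = (√(1 - ρ ^ 2) / ρ) • (I * z₁ (γ 0)) := by
    rw [hγ'0, hγ0]
    refine (z₁_qi_mul _).trans ?_
    change I * ⟨_, _⟩ = _
    apply Complex.ext <;> simp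
  have htorus : ∀ s, (γ s).re ^ 2 + (γ s).imI ^ 2 = ρ ^ 2 ↔ ‖z₁ (γ s)‖ ^ 2 = ‖z₁ (γ 0)‖ ^ 2 :=
    fun s => by rw [sq_norm_z₁, hz0]
  rw [forall_congr' htorus, norm_sq_const_iff_of_horizontal (z := fun t => z₁ (γ t))
    (fun s => z₁.hasFDerivAt.comp_hasDerivAt s (hd1 s))
    (fun s => z₁.hasFDerivAt.comp_hasDerivAt s (hd2 s)) hode hv0, clifford_curvature_iff hρ0 hρ1]
  rw [← norm_ne_zero_iff, ← pow_ne_zero_iff two_ne_zero, hz0]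
  positivity

/-- Let `T_ρ ⊂ S³` be the Clifford torus `|z1|² = ρ²`, `q = (z1,z2) ∈ T_ρ`, and
`w = i·(αz1, −α⁻¹z2)` with `α = √(1−ρ²)/ρ` the unit horizontal tangent vector to
`T_ρ` at `q`.  The geodesic `γ` of curvature `λ` with `γ(0)=q`, `γ'(0)=w` is
entirely contained in `T_ρ` if and only if `λ = (2ρ²−1)/(2ρ√(1−ρ²))`. -/
theorem geodesic_in_clifford_torus (ρ lam : ℝ) (hρ : ρ ∈ Set.Ioo (0:ℝ) 1)
    (q : Quaternion ℝ) (hq : ‖q‖ = 1) (hqT : q.re ^ 2 + q.imI ^ 2 = ρ ^ 2)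
    (γ γ' γ'' : ℝ → Quaternion ℝ)
    (hγ0 : γ 0 = q)
    (hγ'0 : γ' 0 = qi * ⟨Real.sqrt (1 - ρ ^ 2) / ρ * q.re,
        Real.sqrt (1 - ρ ^ 2) / ρ * q.imI,
        -(q.imJ * (ρ / Real.sqrt (1 - ρ ^ 2))),
        -(q.imK * (ρ / Real.sqrt (1 - ρ ^ 2)))⟩)
    (hd1 : ∀ s, HasDerivAt γ (γ' s) s) (hd2 : ∀ s, HasDerivAt γ' (γ'' s) s)
    (heq : ∀ s, γ'' s + γ s + (2 * lam) • (qi * γ' s) = 0) :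
    (∀ s, (γ s).re ^ 2 + (γ s).imI ^ 2 = ρ ^ 2) ↔
      lam = (2 * ρ ^ 2 - 1) / (2 * ρ * Real.sqrt (1 - ρ ^ 2)) :=
  geodesic_in_clifford_torus_general ρ lam hρ q hqT γ γ' γ'' hγ0 hγ'0 hd1 hd2 heq
end

section
/- Under the identification of the Clifford torus T_ρ with R²/Z² via φ(x,y)=(ρ e^{2πix}, √(1−ρ²) e^{2πiy}), a geodesic of curvature λ=(2ρ²−1)/(2ρ√(1−ρ²)) contained in T_ρ corresponds to a straight line of slope m = ((λ/√(1+λ²))+1)/((λ/√(1+λ²))−1). -/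
/-! On `ℍ ≅ ℂ²` left multiplication by `qi` is the complex unit on both factors, so the curve
`s ↦ (ρ e^{i(a s + A)}, √(1-ρ²) e^{i(b s + B)})` solves `γ'' + γ + 2λ qi γ' = 0` as soon as
`a` and `b` are the two roots `√(1+λ²) - λ`, `-(λ + √(1+λ²))` of `x² + 2λx = 1`. For the given
`λ` these are `√(1-ρ²)/ρ` and `-ρ/√(1-ρ²)`, which makes its initial data those of `γ`. Solutions
are unique: the difference of two has conserved energy `‖δ‖² + ‖δ'‖²`, as `v ↦ qi v` is
skew-adjoint. -/

open Real
open scoped RealInnerProductSpace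

/-- The standard flat parameterization `φ : ℝ²/ℤ² → T_ρ`,
`φ(x,y) = (ρ e^{2πix}, √(1−ρ²) e^{2πiy})`. -/
noncomputable def phiT (ρ x y : ℝ) : Quaternion ℝ :=
  ⟨ρ * Real.cos (2 * π * x), ρ * Real.sin (2 * π * x),
    Real.sqrt (1 - ρ ^ 2) * Real.cos (2 * π * y),
    Real.sqrt (1 - ρ ^ 2) * Real.sin (2 * π * y)⟩

section SkewOscillator

variable {E : Type*} [NormedAddCommGroup E] [InnerProductSpace ℝ E]

/-- The energy `‖x‖² + ‖x'‖²` is conserved because the skew term `J` does no work. -/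
theorem eq_zero_of_skew_oscillator {J : E →ₗ[ℝ] E} (hJ : ∀ v, ⟪J v, v⟫ = 0)
    {x x' : ℝ → E} (hx : ∀ s, HasDerivAt x (x' s) s)
    (hx' : ∀ s, HasDerivAt x' (-x s - J (x' s)) s) (h0 : x 0 = 0) (h0' : x' 0 = 0) (s : ℝ) :
    x s = 0 := by
  have henergy : ∀ t, HasDerivAt (fun u => ‖x u‖ ^ 2 + ‖x' u‖ ^ 2) 0 t := by
    intro t
    refine ((hx t).norm_sq.add (hx' t).norm_sq).congr_deriv ?_
    rw [inner_sub_right, inner_neg_right, real_inner_comm (J _), hJ, real_inner_comm]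
    ring
  have hconst : ‖x s‖ ^ 2 + ‖x' s‖ ^ 2 = ‖x 0‖ ^ 2 + ‖x' 0‖ ^ 2 :=
    is_const_of_deriv_eq_zero (fun t => (henergy t).differentiableAt)
      (fun t => (henergy t).deriv) s 0
  rw [h0, h0', norm_zero] at hconst
  have : ‖x s‖ ^ 2 = 0 := by nlinarith [sq_nonneg ‖x s‖, sq_nonneg ‖x' s‖]
  simpa using this

theorem eq_of_skew_oscillator {J : E →ₗ[ℝ] E} (hJ : ∀ v, ⟪J v, v⟫ = 0)
    {x x' x'' y y' y'' : ℝ → E}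
    (hx : ∀ s, HasDerivAt x (x' s) s) (hx' : ∀ s, HasDerivAt x' (x'' s) s)
    (hxeq : ∀ s, x'' s + x s + J (x' s) = 0)
    (hy : ∀ s, HasDerivAt y (y' s) s) (hy' : ∀ s, HasDerivAt y' (y'' s) s)
    (hyeq : ∀ s, y'' s + y s + J (y' s) = 0)
    (h0 : x 0 = y 0) (h0' : x' 0 = y' 0) (s : ℝ) :
    x s = y s := by
  refine sub_eq_zero.mp <| eq_zero_of_skew_oscillator hJ (x' := x' - y')
    (fun t => (hx t).sub (hy t)) (fun t => ?_) (sub_eq_zero.mpr h0) (sub_eq_zero.mpr h0') s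
  refine ((hx' t).sub (hy' t)).congr_deriv ?_
  show x'' t - y'' t = -(x t - y t) - J (x' t - y' t)
  rw [map_sub, eq_neg_add_of_add_eq (hxeq t), eq_neg_add_of_add_eq (hyeq t)]
  abel

end SkewOscillator

/-- `⟨a, b, c, d⟩` typed as `Quaternion ℝ` rather than as the underlying `QuaternionAlgebra`,
so that the `Quaternion` simp lemmas apply to it. -/
@[simps]
def quat (a b c d : ℝ) : Quaternion ℝ := ⟨a, b, c, d⟩

@[simp] theorem qi_re : qi.re = 0 := rfl
@[simp] theorem qi_imI : qi.imI = 1 := rfl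
@[simp] theorem qi_imJ : qi.imJ = 0 := rfl
@[simp] theorem qi_imK : qi.imK = 0 := rfl

theorem hasDerivAt_quat {f g h k : ℝ → ℝ} {f' g' h' k' s : ℝ}
    (hf : HasDerivAt f f' s) (hg : HasDerivAt g g' s) (hh : HasDerivAt h h' s)
    (hk : HasDerivAt k k' s) :
    HasDerivAt (fun t => quat (f t) (g t) (h t) (k t)) (quat f' g' h' k') s := by
  have hsum := (((hf.smul_const (quat 1 0 0 0)).add (hg.smul_const (quat 0 1 0 0))).add
    (hh.smul_const (quat 0 0 1 0))).add (hk.smul_const (quat 0 0 0 1))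
  refine (hsum.congr_deriv ?_).congr_of_eventuallyEq (.of_forall fun t => ?_) <;>
    ext <;> simp

theorem inner_qi_mul_self (v : Quaternion ℝ) : ⟪qi * v, v⟫ = 0 := by
  rw [Quaternion.inner_def, mul_assoc, Quaternion.self_mul_star, Quaternion.mul_coe_eq_smul,
    Quaternion.re_smul, qi_re, smul_zero]

theorem inner_smul_mulLeft_qi_self (c : ℝ) (v : Quaternion ℝ) :
    ⟪(c • LinearMap.mulLeft ℝ qi) v, v⟫ = 0 := by
  rw [LinearMap.smul_apply, LinearMap.mulLeft_apply, real_inner_smul_left, inner_qi_mul_self,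
    mul_zero]

/-- The curve `s ↦ (ρ e^{i(a s + A)}, r e^{i(b s + B)})` under `ℍ ≅ ℂ²`. -/
noncomputable def torusLine (ρ r a b A B s : ℝ) : Quaternion ℝ :=
  quat (ρ * cos (a * s + A)) (ρ * sin (a * s + A)) (r * cos (b * s + B)) (r * sin (b * s + B))

theorem hasDerivAt_torusLine (ρ r a b A B s : ℝ) :
    HasDerivAt (torusLine ρ r a b A B) (qi * torusLine (ρ * a) (r * b) a b A B s) s := by
  have hlin : ∀ c C, HasDerivAt (fun t => c * t + C) c s := fun c C => by
    simpa using ((hasDerivAt_id s).const_mul c).add_const C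
  refine (hasDerivAt_quat ((hlin a A).cos.const_mul ρ) ((hlin a A).sin.const_mul ρ)
    ((hlin b B).cos.const_mul r) ((hlin b B).sin.const_mul r)).congr_deriv ?_
  ext <;> simp [torusLine, Quaternion.re_mul, Quaternion.imI_mul, Quaternion.imJ_mul,
    Quaternion.imK_mul] <;> ring

theorem torusLine_ode {lam ρ r a b A B : ℝ} (ha : a ^ 2 + 2 * lam * a = 1)
    (hb : b ^ 2 + 2 * lam * b = 1) (s : ℝ) :
    qi * (qi * torusLine (ρ * a * a) (r * b * b) a b A B s) + torusLine ρ r a b A B s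
      + (2 * lam) • (qi * (qi * torusLine (ρ * a) (r * b) a b A B s)) = 0 := by
  ext <;> simp [torusLine, Quaternion.re_mul, Quaternion.imI_mul, Quaternion.imJ_mul,
    Quaternion.imK_mul, Quaternion.re_zero, Quaternion.imI_zero, Quaternion.imJ_zero,
    Quaternion.imK_zero]
  · linear_combination (-(ρ * cos (a * s + A))) * ha
  · linear_combination (-(ρ * sin (a * s + A))) * ha
  · linear_combination (-(r * cos (b * s + B))) * hb
  · linear_combination (-(r * sin (b * s + B))) * hb

theorem torusLine_eq_phiT (ρ a b θ θ' s : ℝ) :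
    torusLine ρ √(1 - ρ ^ 2) a b (2 * π * θ) (2 * π * θ') s
      = phiT ρ (a * s / (2 * π) + θ) (b * s / (2 * π) + θ') := by
  have hlin : ∀ c θ₀, 2 * π * (c * s / (2 * π) + θ₀) = c * s + 2 * π * θ₀ := fun c θ₀ => by
    field_simp
  simp only [torusLine, phiT, hlin]
  rfl

theorem sqrt_one_add_sq_clifford_curvature {ρ : ℝ} (hρ : ρ ∈ Set.Ioo 0 1) :
    √(1 + ((2 * ρ ^ 2 - 1) / (2 * ρ * √(1 - ρ ^ 2))) ^ 2) = 1 / (2 * ρ * √(1 - ρ ^ 2)) := by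
  obtain ⟨hρ0, hρ1⟩ := hρ
  have hr2 : √(1 - ρ ^ 2) ^ 2 = 1 - ρ ^ 2 := sq_sqrt (by nlinarith)
  have hr : 0 < √(1 - ρ ^ 2) := sqrt_pos.mpr (by nlinarith)
  rw [sqrt_eq_iff_eq_sq (by positivity) (by positivity)]
  field_simp
  linear_combination 4 * ρ ^ 2 * hr2

theorem clifford_angular_speeds {ρ lam : ℝ} (hρ : ρ ∈ Set.Ioo 0 1)
    (hlam : lam = (2 * ρ ^ 2 - 1) / (2 * ρ * √(1 - ρ ^ 2))) :
    √(1 + lam ^ 2) - lam = √(1 - ρ ^ 2) / ρ ∧ -(lam + √(1 + lam ^ 2)) = -(ρ / √(1 - ρ ^ 2)) := by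
  have hr2 : √(1 - ρ ^ 2) ^ 2 = 1 - ρ ^ 2 := sq_sqrt (by nlinarith [hρ.1, hρ.2])
  have hr : 0 < √(1 - ρ ^ 2) := sqrt_pos.mpr (by nlinarith [hρ.1, hρ.2])
  have hρ0 := hρ.1
  rw [hlam, sqrt_one_add_sq_clifford_curvature hρ]
  constructor
  · field_simp
    linear_combination -2 * hr2
  · field_simp
    ring

theorem neg_add_div_sub_eq_div_add_one_div {lam L : ℝ} (hL : L ≠ 0) :
    -(lam + L) / (L - lam) = (lam / L + 1) / (lam / L - 1) := by
  rw [div_add_one hL, div_sub_one hL, div_div_div_cancel_right₀ hL, neg_div, ← div_neg, neg_sub]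

/-- Under the identification of the Clifford torus `T_ρ` with `ℝ²/ℤ²` via `φ`, a
geodesic of curvature `λ = (2ρ²−1)/(2ρ√(1−ρ²))` contained in `T_ρ` is the
straight line `s ↦ ((√(1+λ²)−λ)s/2π + θ, −(λ+√(1+λ²))s/2π + θ')`, whose slope
equals `m = ((λ/√(1+λ²))+1)/((λ/√(1+λ²))−1)`. -/
theorem geodesic_is_line_in_torus (ρ lam θ θ' : ℝ) (hρ : ρ ∈ Set.Ioo (0:ℝ) 1)
    (hlam : lam = (2 * ρ ^ 2 - 1) / (2 * ρ * Real.sqrt (1 - ρ ^ 2)))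
    (γ γ' γ'' : ℝ → Quaternion ℝ)
    (hγ0 : γ 0 = phiT ρ θ θ')
    (hγ'0 : γ' 0 = qi * ⟨Real.sqrt (1 - ρ ^ 2) / ρ * (γ 0).re,
        Real.sqrt (1 - ρ ^ 2) / ρ * (γ 0).imI,
        -((γ 0).imJ * (ρ / Real.sqrt (1 - ρ ^ 2))),
        -((γ 0).imK * (ρ / Real.sqrt (1 - ρ ^ 2)))⟩)
    (hd1 : ∀ s, HasDerivAt γ (γ' s) s) (hd2 : ∀ s, HasDerivAt γ' (γ'' s) s)
    (heq : ∀ s, γ'' s + γ s + (2 * lam) • (qi * γ' s) = 0) :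
    (∀ s : ℝ, γ s = phiT ρ ((Real.sqrt (1 + lam ^ 2) - lam) * s / (2 * π) + θ)
        (-(lam + Real.sqrt (1 + lam ^ 2)) * s / (2 * π) + θ')) ∧
    (-(lam + Real.sqrt (1 + lam ^ 2)) / (Real.sqrt (1 + lam ^ 2) - lam) =
      (lam / Real.sqrt (1 + lam ^ 2) + 1) / (lam / Real.sqrt (1 + lam ^ 2) - 1)) := by
  obtain ⟨ha, hb⟩ := clifford_angular_speeds hρ hlam
  set L := √(1 + lam ^ 2)
  have hL2 : L ^ 2 = 1 + lam ^ 2 := sq_sqrt (by positivity)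
  set c := torusLine ρ √(1 - ρ ^ 2) (L - lam) (-(lam + L)) (2 * π * θ) (2 * π * θ')
  have hc0 : c 0 = γ 0 := by
    simpa [c, hγ0] using torusLine_eq_phiT ρ (L - lam) (-(lam + L)) θ θ' 0
  have hc'0 : qi * torusLine (ρ * (L - lam)) (√(1 - ρ ^ 2) * -(lam + L)) (L - lam) (-(lam + L))
      (2 * π * θ) (2 * π * θ') 0 = γ' 0 := by
    rw [hγ'0, hγ0, ha, hb]
    congr 1
    ext <;> simp [torusLine, phiT] <;> ring
  have hγc : ∀ s, γ s = c s :=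
    eq_of_skew_oscillator (J := (2 * lam) • LinearMap.mulLeft ℝ qi) (inner_smul_mulLeft_qi_self _)
      hd1 hd2 heq (hasDerivAt_torusLine _ _ _ _ _ _)
      (fun s => (hasDerivAt_torusLine _ _ _ _ _ _ s).const_mul qi)
      (torusLine_ode (by linear_combination hL2) (by linear_combination hL2)) hc0.symm hc'0.symm
  exact ⟨fun s => (hγc s).trans (torusLine_eq_phiT _ _ _ _ _ _),
    neg_add_div_sub_eq_div_add_one_div (sqrt_pos.mpr (by positivity)).ne'⟩
end

section
/- Let γ be a geodesic of curvature λ in the sub-Riemannian S^3 and X the variational vector field of a variation of γ by horizontal curves parameterized by arc-length. Then the function λ⟨X, V(γ)⟩ + ⟨X, γ'⟩ is constant along γ, where V(q)=i·q. -/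
open Real
open scoped RealInnerProductSpace

/-!
Let `Q = λ⟨X, iγ⟩ + ⟨X, γ'⟩`. Differentiating, and using the geodesic equation
`γ'' = -γ - 2λ iγ'`, gives `Q' = λ(⟨X', iγ⟩ - ⟨X, iγ'⟩) - ⟨X, γ⟩ + ⟨X', γ'⟩`,
where `X' = ∂²F/∂s∂ε` may be computed in either order since `F` is `C²`.
Each term vanishes by differentiating a constraint of the variation in `ε`:
`|F| = 1` gives `⟨X, γ⟩ = 0`, `|∂F/∂s| = 1` gives `⟨X', γ'⟩ = 0`, and horizontality,
together with skew-adjointness of left multiplication by `i`, gives `⟨X', iγ⟩ = ⟨X, iγ'⟩`.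
-/

theorem Quaternion.inner_mul_left_eq_neg_of_re_eq_zero {q : Quaternion ℝ} (hq : q.re = 0)
    (a b : Quaternion ℝ) : ⟪q * a, b⟫ = -⟪a, q * b⟫ := by
  simp only [Quaternion.inner_def, Quaternion.re_mul, Quaternion.re_star, Quaternion.imI_star,
    Quaternion.imJ_star, Quaternion.imK_star, Quaternion.imI_mul, Quaternion.imJ_mul,
    Quaternion.imK_mul, hq]
  ring

section Calculus

variable {E : Type*} [NormedAddCommGroup E] [NormedSpace ℝ E]

theorem hasDerivAt_fderiv_apply_one_zero {g : ℝ × ℝ → E} {s ε : ℝ}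
    (hg : DifferentiableAt ℝ g (s, ε)) :
    HasDerivAt (fun t => g (t, ε)) (fderiv ℝ g (s, ε) (1, 0)) s :=
  hg.hasFDerivAt.comp_hasDerivAt (f := fun t => (t, ε)) s
    ((hasDerivAt_id s).prodMk (hasDerivAt_const s ε))

theorem hasDerivAt_fderiv_apply_zero_one {g : ℝ × ℝ → E} {s ε : ℝ}
    (hg : DifferentiableAt ℝ g (s, ε)) :
    HasDerivAt (fun e => g (s, e)) (fderiv ℝ g (s, ε) (0, 1)) ε :=
  hg.hasFDerivAt.comp_hasDerivAt (f := fun e => (s, e)) ε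
    ((hasDerivAt_const ε s).prodMk (hasDerivAt_id ε))

theorem exists_hasDerivAt_partial_comm {F Fs Fe : ℝ → ℝ → E}
    (hC : ContDiff ℝ 2 (fun q : ℝ × ℝ => F q.1 q.2))
    (hFs : ∀ s ε, HasDerivAt (fun t => F t ε) (Fs s ε) s)
    (hFe : ∀ s ε, HasDerivAt (fun e => F s e) (Fe s ε) ε) (s ε : ℝ) :
    ∃ X', HasDerivAt (fun t => Fe t ε) X' s ∧ HasDerivAt (fun e => Fs s e) X' ε := by
  set g : ℝ × ℝ → E := fun q => F q.1 q.2
  have hg : Differentiable ℝ g := hC.differentiable (by norm_num)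
  have hDg : Differentiable ℝ (fderiv ℝ g) :=
    (hC.fderiv_right (m := 1) (by norm_num)).differentiable one_ne_zero
  have hFs_eq : Fs = fun s ε => fderiv ℝ g (s, ε) (1, 0) := by
    ext s ε : 2
    exact (hFs s ε).unique (hasDerivAt_fderiv_apply_one_zero (hg _))
  have hFe_eq : Fe = fun s ε => fderiv ℝ g (s, ε) (0, 1) := by
    ext s ε : 2
    exact (hFe s ε).unique (hasDerivAt_fderiv_apply_zero_one (hg _))
  have hsymm : fderiv ℝ (fderiv ℝ g) (s, ε) (0, 1) (1, 0) =
      fderiv ℝ (fderiv ℝ g) (s, ε) (1, 0) (0, 1) :=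
    second_derivative_symmetric (fun y => (hg y).hasFDerivAt) (hDg _).hasFDerivAt _ _
  refine ⟨fderiv ℝ (fderiv ℝ g) (s, ε) (1, 0) (0, 1), ?_, ?_⟩
  · rw [hFe_eq]
    simpa using (hasDerivAt_fderiv_apply_one_zero (hDg _)).clm_apply
      (hasDerivAt_const s ((0 : ℝ), (1 : ℝ)))
  · rw [hFs_eq, ← hsymm]
    simpa using (hasDerivAt_fderiv_apply_zero_one (hDg _)).clm_apply
      (hasDerivAt_const ε ((1 : ℝ), (0 : ℝ)))

end Calculus

section InnerProduct

variable {E : Type*} [NormedAddCommGroup E] [InnerProductSpace ℝ E]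

theorem inner_add_inner_eq_zero_of_inner_const {u v : ℝ → E} {u' v' : E} {x c : ℝ}
    (h : ∀ e, ⟪u e, v e⟫ = c) (hu : HasDerivAt u u' x) (hv : HasDerivAt v v' x) :
    ⟪u x, v'⟫ + ⟪u', v x⟫ = 0 := by
  have hconst : (fun e => ⟪u e, v e⟫) = fun _ => c := funext h
  have := hu.inner ℝ hv
  rw [hconst] at this
  exact this.unique (hasDerivAt_const x c)

theorem inner_eq_zero_of_norm_const {u : ℝ → E} {u' : E} {x r : ℝ}
    (h : ∀ e, ‖u e‖ = r) (hu : HasDerivAt u u' x) : ⟪u', u x⟫ = 0 := by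
  have := inner_add_inner_eq_zero_of_inner_const (c := r ^ 2)
    (fun e => by rw [real_inner_self_eq_norm_sq, h]) hu hu
  rw [real_inner_comm (u x)] at this ⊢
  linarith

end InnerProduct

theorem jacobi_first_integral_deriv_eq_zero (lam : ℝ) {γ γ' γ'' X X' : Quaternion ℝ}
    (hgeo : γ'' + γ + (2 * lam) • (qi * γ') = 0) (hXγ : ⟪X, γ⟫ = 0) (hX'γ' : ⟪X', γ'⟫ = 0)
    (hhor : ⟪γ', qi * X⟫ + ⟪X', qi * γ⟫ = 0) :
    lam * (⟪X, qi * γ'⟫ + ⟪X', qi * γ⟫) + (⟪X, γ''⟫ + ⟪X', γ'⟫) = 0 := by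
  have hγ'' : γ'' = -γ - (2 * lam) • (qi * γ') := by
    rw [← sub_eq_zero, ← hgeo]; abel
  have hskew : ⟪γ', qi * X⟫ = -⟪X, qi * γ'⟫ := by
    rw [← Quaternion.inner_mul_left_eq_neg_of_re_eq_zero rfl, real_inner_comm]
  rw [hskew] at hhor
  rw [hγ'', inner_sub_right, inner_neg_right, real_inner_smul_right, hXγ, hX'γ']
  linear_combination lam * hhor

/-- Let `γ(s) = F(s,0)` be a geodesic of curvature `λ` in the sub-Riemannian `S³`
and `X(s) = ∂F/∂ε(s,0)` the variational vector field of a C² variation `F` of `γ`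
by horizontal curves parameterized by arc-length.  Then the function
`λ⟨X, V(γ)⟩ + ⟨X, γ'⟩`, with `V(q) = i·q`, is constant along `γ`. -/
theorem jacobi_first_integral (lam : ℝ)
    (F Fs Fe : ℝ → ℝ → Quaternion ℝ) (γ'' : ℝ → Quaternion ℝ)
    (hC : ContDiff ℝ 2 (fun q : ℝ × ℝ => F q.1 q.2))
    (hFs : ∀ s ε, HasDerivAt (fun t => F t ε) (Fs s ε) s)
    (hFe : ∀ s ε, HasDerivAt (fun e => F s e) (Fe s ε) ε)
    (hsph : ∀ s ε, ‖F s ε‖ = 1)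
    (hunit : ∀ s ε, ‖Fs s ε‖ = 1)
    (hhor : ∀ s ε, ⟪Fs s ε, qi * F s ε⟫ = 0)
    (hd2 : ∀ s, HasDerivAt (fun t => Fs t 0) (γ'' s) s)
    (hgeo : ∀ s, γ'' s + F s 0 + (2 * lam) • (qi * Fs s 0) = 0) :
    ∀ s₁ s₂ : ℝ,
      lam * ⟪Fe s₁ 0, qi * F s₁ 0⟫ + ⟪Fe s₁ 0, Fs s₁ 0⟫ =
      lam * ⟪Fe s₂ 0, qi * F s₂ 0⟫ + ⟪Fe s₂ 0, Fs s₂ 0⟫ := by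
  choose X' hX's hX'e using fun s => exists_hasDerivAt_partial_comm hC hFs hFe s 0
  have hderiv : ∀ s, HasDerivAt (fun t => lam * ⟪Fe t 0, qi * F t 0⟫ + ⟪Fe t 0, Fs t 0⟫) 0 s := by
    intro s
    have hXγ := inner_eq_zero_of_norm_const (hsph s) (hFe s 0)
    have hX'γ' := inner_eq_zero_of_norm_const (hunit s) (hX'e s)
    have hhor' := inner_add_inner_eq_zero_of_inner_const (hhor s) (hX'e s)
      ((hFe s 0).const_mul qi)
    have hQ := (((hX's s).inner ℝ ((hFs s 0).const_mul qi)).const_mul lam).add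
      ((hX's s).inner ℝ (hd2 s))
    rwa [jacobi_first_integral_deriv_eq_zero lam (hgeo s) hXγ hX'γ' hhor'] at hQ
  intro s₁ s₂
  exact is_const_of_deriv_eq_zero (fun t => (hderiv t).differentiableAt)
    (fun t => (hderiv t).deriv) s₁ s₂
end

section
/- For a solution (ω(s), τ(s), σ(s)) of the rotationally-invariant constant mean curvature system ω'=cos σ, τ'=sin σ/cos ω, σ' = tan ω sin σ − cot³ω sin³σ + 2H(sin²ω cos²σ + sin²σ)^{3/2}/sin²ω, with H constant, the quantity E = sin ω cos ω sin σ/√(sin²ω cos²σ + sin²σ) − H sin²ω is constant along the solution. -/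
/-!
Write `a = sin ω`, `b = cos ω`, `c = sin σ`, `d = cos σ` and `r = √(a²d² + c²)`. Along any curve
with `ω' = cos σ`, differentiating `E = abc/r - H a²` and simplifying with `a² + b² = 1`,
`c² + d² = 1` gives
`E' = (a³ b d / r³) (σ' - (a c / b - b³ c³ / a³ + 2 H r³ / a²))`,
and the second factor is exactly the defect of the `σ`-equation. So `E' = 0` along solutions.
-/

open Real

noncomputable def energy (H w z : ℝ) : ℝ :=
  sin w * cos w * sin z / √(sin w ^ 2 * cos z ^ 2 + sin z ^ 2) - H * sin w ^ 2

noncomputable def sigmaRhs (H w z : ℝ) : ℝ :=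
  tan w * sin z - cot w ^ 3 * sin z ^ 3
    + 2 * H * (sin w ^ 2 * cos z ^ 2 + sin z ^ 2) ^ ((3 : ℝ) / 2) / sin w ^ 2

lemma rpow_three_halves_eq_sqrt_pow {x : ℝ} (hx : 0 ≤ x) : x ^ ((3 : ℝ) / 2) = √x ^ 3 := by
  rw [sqrt_eq_rpow, ← rpow_natCast, ← rpow_mul hx]
  norm_num

lemma sin_sq_mul_cos_sq_add_sin_sq_pos {w z : ℝ} (hw : sin w ≠ 0) :
    0 < sin w ^ 2 * cos z ^ 2 + sin z ^ 2 := by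
  have ha : 0 < sin w ^ 2 := by positivity
  rcases eq_or_ne (sin z) 0 with hz | hz
  · have hcos : cos z ^ 2 = 1 := by linarith [sin_sq_add_cos_sq z, sq_eq_zero_iff.mpr hz]
    simpa [hz, hcos] using ha
  · positivity

section Derivatives

variable {ω σ : ℝ → ℝ} {s σ' : ℝ}

lemma hasDerivAt_sin_mul_cos_mul_sin (hω : HasDerivAt ω (cos (σ s)) s) (hσ : HasDerivAt σ σ' s) :
    HasDerivAt (fun t => sin (ω t) * cos (ω t) * sin (σ t))
      ((cos (ω s) ^ 2 - sin (ω s) ^ 2) * sin (σ s) * cos (σ s)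
        + sin (ω s) * cos (ω s) * cos (σ s) * σ') s := by
  refine ((hω.sin.mul hω.cos).mul hσ.sin).congr_deriv ?_
  simp only [Pi.mul_apply]
  ring

lemma hasDerivAt_sin_sq_mul_cos_sq_add_sin_sq (hω : HasDerivAt ω (cos (σ s)) s)
    (hσ : HasDerivAt σ σ' s) :
    HasDerivAt (fun t => sin (ω t) ^ 2 * cos (σ t) ^ 2 + sin (σ t) ^ 2)
      (2 * sin (ω s) * cos (ω s) * cos (σ s) ^ 3
        + 2 * cos (ω s) ^ 2 * sin (σ s) * cos (σ s) * σ') s := by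
  refine (((hω.sin.pow 2).mul (hσ.cos.pow 2)).add (hσ.sin.pow 2)).congr_deriv ?_
  simp only [Pi.pow_apply]
  linear_combination -2 * sin (σ s) * cos (σ s) * σ' * Real.sin_sq_add_cos_sq (ω s)

lemma hasDerivAt_energy (H : ℝ) (hω : HasDerivAt ω (cos (σ s)) s) (hσ : HasDerivAt σ σ' s)
    (hsin : sin (ω s) ≠ 0) (hcos : cos (ω s) ≠ 0) :
    HasDerivAt (fun t => energy H (ω t) (σ t))
      (sin (ω s) ^ 3 * cos (ω s) * cos (σ s)
          / √(sin (ω s) ^ 2 * cos (σ s) ^ 2 + sin (σ s) ^ 2) ^ 3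
        * (σ' - sigmaRhs H (ω s) (σ s))) s := by
  have hQ := sin_sq_mul_cos_sq_add_sin_sq_pos (z := σ s) hsin
  have hr : 0 < √(sin (ω s) ^ 2 * cos (σ s) ^ 2 + sin (σ s) ^ 2) := sqrt_pos.mpr hQ
  have hE := ((hasDerivAt_sin_mul_cos_mul_sin hω hσ).div
    ((hasDerivAt_sin_sq_mul_cos_sq_add_sin_sq hω hσ).sqrt hQ.ne') hr.ne').sub
    ((hω.sin.pow 2).const_mul H)
  refine hE.congr_deriv ?_
  rw [sigmaRhs, rpow_three_halves_eq_sqrt_pow hQ.le, tan_eq_sin_div_cos, cot_eq_cos_div_sin]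
  have hr2 := sq_sqrt hQ.le
  set a := sin (ω s)
  set b := cos (ω s)
  set c := sin (σ s)
  set d := cos (σ s)
  set r := √(a ^ 2 * d ^ 2 + c ^ 2)
  have hab : a ^ 2 + b ^ 2 = 1 := sin_sq_add_cos_sq _
  have hcd : c ^ 2 + d ^ 2 = 1 := sin_sq_add_cos_sq _
  have key : (b ^ 2 - a ^ 2) * c * r ^ 2 - a ^ 2 * b ^ 2 * c * d ^ 2 = b ^ 4 * c ^ 3 - a ^ 4 * c := by
    rw [hr2]
    linear_combination (a ^ 2 * c ^ 3 - b ^ 2 * c ^ 3) * hab - a ^ 4 * c * hcd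
  field_simp
  linear_combination d * key + d * a * b * σ' * (hr2 + a ^ 2 * hcd - c ^ 2 * hab)

end Derivatives

theorem energy_first_integral_general (H : ℝ) (ω σ : ℝ → ℝ)
    (hrange : ∀ s, ω s ∈ Set.Ioo 0 (π / 2))
    (hω : ∀ s, HasDerivAt ω (Real.cos (σ s)) s)
    (hσ : ∀ s, HasDerivAt σ
      (Real.tan (ω s) * Real.sin (σ s)
        - Real.cot (ω s) ^ 3 * Real.sin (σ s) ^ 3
        + 2 * H * (Real.sin (ω s) ^ 2 * Real.cos (σ s) ^ 2
            + Real.sin (σ s) ^ 2) ^ ((3 : ℝ) / 2) / Real.sin (ω s) ^ 2) s) :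
    ∀ s₁ s₂ : ℝ,
      Real.sin (ω s₁) * Real.cos (ω s₁) * Real.sin (σ s₁) /
          Real.sqrt (Real.sin (ω s₁) ^ 2 * Real.cos (σ s₁) ^ 2 + Real.sin (σ s₁) ^ 2)
        - H * Real.sin (ω s₁) ^ 2 =
      Real.sin (ω s₂) * Real.cos (ω s₂) * Real.sin (σ s₂) /
          Real.sqrt (Real.sin (ω s₂) ^ 2 * Real.cos (σ s₂) ^ 2 + Real.sin (σ s₂) ^ 2)
        - H * Real.sin (ω s₂) ^ 2 := by
  have hE : ∀ s, HasDerivAt (fun t => energy H (ω t) (σ t)) 0 s := fun s => by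
    obtain ⟨h0, hπ⟩ := hrange s
    have hsin : sin (ω s) ≠ 0 := (sin_pos_of_pos_of_lt_pi h0 (by linarith [pi_pos])).ne'
    have hcos : cos (ω s) ≠ 0 := (cos_pos_of_mem_Ioo ⟨by linarith [pi_pos], hπ⟩).ne'
    have hσ' : HasDerivAt σ (sigmaRhs H (ω s) (σ s)) s := hσ s
    simpa using hasDerivAt_energy H (hω s) hσ' hsin hcos
  exact is_const_of_deriv_eq_zero (fun s => (hE s).differentiableAt) (fun s => (hE s).deriv)

/-- First integral (energy) of the ODE system `(*)_H` for generating curves of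
rotationally invariant constant mean curvature surfaces in the sub-Riemannian
`S³`: along any solution of `ω' = cos σ`, `τ' = sin σ/cos ω`,
`σ' = tan ω sin σ − cot³ω sin³σ + 2H(sin²ω cos²σ + sin²σ)^{3/2}/sin²ω`,
with `H` constant, the quantity
`E = sin ω cos ω sin σ/√(sin²ω cos²σ + sin²σ) − H sin²ω` is constant. -/
theorem energy_first_integral (H : ℝ) (ω τ σ : ℝ → ℝ)
    (hrange : ∀ s, ω s ∈ Set.Ioo 0 (π / 2))
    (hω : ∀ s, HasDerivAt ω (Real.cos (σ s)) s)
    (hτ : ∀ s, HasDerivAt τ (Real.sin (σ s) / Real.cos (ω s)) s)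
    (hσ : ∀ s, HasDerivAt σ
      (Real.tan (ω s) * Real.sin (σ s)
        - Real.cot (ω s) ^ 3 * Real.sin (σ s) ^ 3
        + 2 * H * (Real.sin (ω s) ^ 2 * Real.cos (σ s) ^ 2
            + Real.sin (σ s) ^ 2) ^ ((3 : ℝ) / 2) / Real.sin (ω s) ^ 2) s) :
    ∀ s₁ s₂ : ℝ,
      Real.sin (ω s₁) * Real.cos (ω s₁) * Real.sin (σ s₁) /
          Real.sqrt (Real.sin (ω s₁) ^ 2 * Real.cos (σ s₁) ^ 2 + Real.sin (σ s₁) ^ 2)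
        - H * Real.sin (ω s₁) ^ 2 =
      Real.sin (ω s₂) * Real.cos (ω s₂) * Real.sin (σ s₂) /
          Real.sqrt (Real.sin (ω s₂) ^ 2 * Real.cos (σ s₂) ^ 2 + Real.sin (σ s₂) ^ 2)
        - H * Real.sin (ω s₂) ^ 2 :=
  energy_first_integral_general H ω σ hrange hω hσ
end
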